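/- arXiv:2511.00493 — 2 statements merged into one kernel-verified Lean document; each statement's English description precedes it below -/
import Mathlib

section
/- Let x ∈ ℂ^N with x_0 = 0 and Σ_{n=1}^{N-1} x_n = 0. Define Φ(x)(t) = (Σ_{k=1}^{N-1} x_k e^{2πkt/√N})/(1 - e^{2πt√N}) for real t. Then Φ(x) extends to a smooth function on ℝ that decays exponentially as t → ±∞ (in particular Φ(x) is a Schwartz function). -/
open Finset Complex

noncomputable def PhiSeq (N : ℕ) (x : ℕ → ℂ) (t : ℂ) : ℂ :=
  (∑ k ∈ Finset.Ico 1 N, x k * Complex.exp (2 * Real.pi * k * t / Real.sqrt N)) /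
    (1 - Complex.exp (2 * Real.pi * t * Real.sqrt N))

theorem PhiSeq_smooth_exp_decay (N : ℕ) (hN : 1 ≤ N) (x : ℕ → ℂ)
    (hx0 : x 0 = 0) (hxsum : ∑ n ∈ Finset.Ico 1 N, x n = 0) :
    ∃ g : ℝ → ℂ, ContDiff ℝ (⊤ : ℕ∞) g ∧ (∀ t : ℝ, t ≠ 0 → g t = PhiSeq N x (t : ℂ)) ∧
      ∃ C a : ℝ, 0 < a ∧ ∀ t : ℝ, ‖g t‖ ≤ C * Real.exp (-a * |t|) := by
  have hNpos : (0:ℝ) < N := by exact_mod_cast hN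
  obtain ⟨s, hs_def, hs0, hsN⟩ : ∃ s : ℝ, s = Real.sqrt N ∧ 0 < s ∧ s * s = N :=
    ⟨_, rfl, Real.sqrt_pos.mpr hNpos, Real.mul_self_sqrt hNpos.le⟩
  obtain ⟨a, ha_def, ha⟩ : ∃ a : ℝ, a = 2 * Real.pi / s ∧ 0 < a :=
    ⟨_, rfl, by positivity⟩
  obtain ⟨c, hc_def⟩ : ∃ c : ℕ → ℝ, c = fun j : ℕ => (j : ℝ) * a := ⟨_, rfl⟩
  obtain ⟨D, hD_def⟩ : ∃ D : ℝ → ℝ,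
      D = fun t => ∑ j ∈ Finset.range N, Real.exp (c j * t) := ⟨_, rfl⟩
  obtain ⟨R, hR_def⟩ : ∃ R : ℝ → ℂ, R = fun t => ∑ k ∈ Finset.Ico 1 N, x k *
      ∑ j ∈ Finset.Ico 1 k, Complex.exp ((c j * t : ℝ) : ℂ) := ⟨_, rfl⟩
  have hDpos : ∀ t, 0 < D t := by
    intro t
    rw [hD_def]
    apply Finset.sum_pos (fun j _ => Real.exp_pos _)
    exact Finset.nonempty_range_iff.mpr (by omega)
  have hs0' : (s:ℂ) ≠ 0 := by exact_mod_cast hs0.ne'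
  refine ⟨fun t => -R t / ((D t : ℝ) : ℂ), ?_, ?_, ?_⟩
  · -- smoothness
    have h1 : ContDiff ℝ (⊤ : ℕ∞) (fun t => -R t) := by
      rw [hR_def]
      apply ContDiff.neg
      apply ContDiff.sum
      intro k _
      apply ContDiff.mul contDiff_const
      apply ContDiff.sum
      intro j _
      exact (Complex.ofRealCLM.contDiff.comp (contDiff_const.mul contDiff_id)).cexp
    have hDc : ContDiff ℝ (⊤ : ℕ∞) D := by
      rw [hD_def]
      apply ContDiff.sum
      intro j _
      exact (contDiff_const.mul contDiff_id).exp
    have h2 : ContDiff ℝ (⊤ : ℕ∞) (fun t => (((D t)⁻¹ : ℝ) : ℂ)) :=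
      Complex.ofRealCLM.contDiff.comp (hDc.inv fun t => (hDpos t).ne')
    have heq : (fun t => -R t / ((D t : ℝ) : ℂ))
        = fun t => -R t * (((D t)⁻¹ : ℝ) : ℂ) := by
      funext t; rw [Complex.ofReal_inv, div_eq_mul_inv]
    rw [heq]
    exact h1.mul h2
  · -- equality with PhiSeq off 0
    intro t ht
    set q : ℂ := Complex.exp ((a * t : ℝ) : ℂ) with hq_def
    have hexp : ∀ j : ℕ, Complex.exp ((c j * t : ℝ) : ℂ) = q ^ j := by
      intro j
      rw [hq_def, ← Complex.exp_nat_mul]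
      congr 1
      push_cast [hc_def]
      ring
    have hnum : ∀ k : ℕ, Complex.exp (2 * (Real.pi:ℂ) * k * t / s) = q ^ k := by
      intro k
      rw [hq_def, ← Complex.exp_nat_mul]
      congr 1
      push_cast [ha_def]
      field_simp
    have hden : Complex.exp (2 * (Real.pi:ℂ) * t * s) = q ^ N := by
      rw [hq_def, ← Complex.exp_nat_mul]
      congr 1
      have hsNc : (s:ℂ) * s = N := by exact_mod_cast hsN
      push_cast [ha_def]
      field_simp
      linear_combination (t:ℂ) * hsNc
    have hq1 : q ≠ 1 := by
      rw [hq_def, ← Complex.ofReal_exp, ← Complex.ofReal_one, Ne, Complex.ofReal_inj,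
        Real.exp_eq_one_iff]
      exact mul_ne_zero ha.ne' ht
    have hq1' : q - 1 ≠ 0 := sub_ne_zero.mpr hq1
    have hDq : ((D t : ℝ) : ℂ) = ∑ j ∈ Finset.range N, q ^ j := by
      rw [hD_def]
      push_cast [← Complex.ofReal_exp]
      exact Finset.sum_congr rfl fun j _ => (Complex.ofReal_exp _).trans (hexp j)
    have hDne : ((D t : ℝ) : ℂ) ≠ 0 := Complex.ofReal_ne_zero.mpr (hDpos t).ne'
    have hgeom : (q - 1) * ((D t : ℝ) : ℂ) = q ^ N - 1 := by
      rw [hDq, mul_comm, geom_sum_mul]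
    have hRt : R t = ∑ k ∈ Finset.Ico 1 N, x k * ∑ j ∈ Finset.Ico 1 k, q ^ j := by
      rw [hR_def]
      exact Finset.sum_congr rfl fun k _ => by
        rw [Finset.sum_congr rfl fun j _ => hexp j]
    have hterm : ∀ k ∈ Finset.Ico 1 N,
        x k * q ^ k = x k * ((q - 1) * ∑ j ∈ Finset.Ico 1 k, q ^ j) + x k * q := by
      intro k hk
      rw [Finset.mem_Ico] at hk
      have h1 : ∑ j ∈ Finset.Ico 1 k, q ^ j = (∑ j ∈ Finset.range k, q ^ j) - 1 := by
        rw [Finset.range_eq_Ico, Finset.sum_eq_sum_Ico_succ_bot (by omega : 0 < k)]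
        simp
      have h2 : (q - 1) * ((∑ j ∈ Finset.range k, q ^ j) - 1) = q ^ k - q := by
        rw [mul_sub, mul_one, mul_comm (q - 1), geom_sum_mul]
        ring
      rw [h1, h2]
      ring
    have hP : (∑ k ∈ Finset.Ico 1 N, x k * q ^ k) = (q - 1) * R t := by
      rw [Finset.sum_congr rfl hterm, Finset.sum_add_distrib, ← Finset.sum_mul, hxsum,
        zero_mul, add_zero, hRt, Finset.mul_sum]
      exact Finset.sum_congr rfl fun k _ => by ring
    have hPhi : PhiSeq N x (t:ℂ) = (∑ k ∈ Finset.Ico 1 N, x k * q ^ k) / (1 - q ^ N) := by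
      unfold PhiSeq
      rw [← hs_def, hden]
      congr 1
      exact Finset.sum_congr rfl fun k _ => by rw [hnum k]
    rw [hPhi, hP]
    have h1N : (1:ℂ) - q ^ N = -((q - 1) * ((D t : ℝ) : ℂ)) := by rw [hgeom]; ring
    rw [h1N]
    field_simp
  · -- exponential decay
    refine ⟨∑ k ∈ Finset.Ico 1 N, ‖x k‖ * k, a, ha, fun t => ?_⟩
    set C : ℝ := ∑ k ∈ Finset.Ico 1 N, ‖x k‖ * k with hC_def
    have hEt : (0:ℝ) < Real.exp (-a * |t|) := Real.exp_pos _
    have key : ∀ k ∈ Finset.Ico 1 N, ∀ j ∈ Finset.Ico 1 k,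
        Real.exp (c j * t) ≤ Real.exp (-a * |t|) * D t := by
      intro k hk j hj
      rw [Finset.mem_Ico] at hk hj
      have hbound : ∃ i ∈ Finset.range N, c j * t + a * |t| ≤ c i * t := by
        rcases le_or_gt t 0 with h | h
        · refine ⟨0, Finset.mem_range.mpr (by omega), ?_⟩
          rw [abs_of_nonpos h, hc_def]
          have hj1 : (1:ℝ) ≤ (j:ℝ) := by exact_mod_cast hj.1
          show (j:ℝ) * a * t + a * -t ≤ ((0:ℕ):ℝ) * a * t
          push_cast
          nlinarith [mul_nonneg (mul_nonneg (sub_nonneg.mpr hj1) ha.le) (neg_nonneg.mpr h)]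
        · refine ⟨N - 1, Finset.mem_range.mpr (by omega), ?_⟩
          rw [abs_of_pos h, hc_def]
          have hjN : (j:ℝ) + 1 ≤ ((N - 1 : ℕ) : ℝ) := by
            exact_mod_cast (by omega : j + 1 ≤ N - 1)
          show (j:ℝ) * a * t + a * t ≤ ((N - 1 : ℕ):ℝ) * a * t
          nlinarith [mul_nonneg (mul_nonneg (sub_nonneg.mpr hjN) ha.le) h.le]
      obtain ⟨i, hi, hle⟩ := hbound
      have h1 : Real.exp (c j * t + a * |t|) ≤ D t := by
        refine le_trans (Real.exp_le_exp.mpr hle) ?_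
        simp only [hD_def]
        exact Finset.single_le_sum (f := fun i => Real.exp (c i * t))
          (fun i _ => (Real.exp_pos _).le) hi
      rw [Real.exp_add] at h1
      rw [neg_mul, Real.exp_neg, inv_mul_eq_div, le_div_iff₀ (Real.exp_pos _)]
      exact h1
    have hRbound : ‖R t‖ ≤ C * Real.exp (-a * |t|) * D t := by
      have step1 : ‖R t‖ ≤ ∑ k ∈ Finset.Ico 1 N, ‖x k‖ * ∑ j ∈ Finset.Ico 1 k,
          Real.exp (c j * t) := by
        rw [hR_def]
        refine (norm_sum_le _ _).trans (Finset.sum_le_sum fun k _ => ?_)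
        rw [norm_mul]
        refine mul_le_mul_of_nonneg_left ((norm_sum_le _ _).trans (le_of_eq ?_)) (norm_nonneg _)
        refine Finset.sum_congr rfl fun j _ => ?_
        rw [Complex.norm_exp]
        simp
      have step2 : ∑ k ∈ Finset.Ico 1 N, ‖x k‖ * ∑ j ∈ Finset.Ico 1 k, Real.exp (c j * t)
          ≤ ∑ k ∈ Finset.Ico 1 N, ‖x k‖ * ((k:ℝ) * (Real.exp (-a * |t|) * D t)) := by
        refine Finset.sum_le_sum fun k hk => mul_le_mul_of_nonneg_left ?_ (norm_nonneg _)
        calc ∑ j ∈ Finset.Ico 1 k, Real.exp (c j * t)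
            ≤ ∑ _j ∈ Finset.Ico 1 k, Real.exp (-a * |t|) * D t :=
              Finset.sum_le_sum fun j hj => key k hk j hj
          _ = ((k - 1 : ℕ) : ℝ) * (Real.exp (-a * |t|) * D t) := by
              rw [Finset.sum_const, Nat.card_Ico, nsmul_eq_mul]
          _ ≤ (k:ℝ) * (Real.exp (-a * |t|) * D t) := by
              have hk1 : ((k - 1 : ℕ) : ℝ) ≤ (k : ℝ) := by exact_mod_cast Nat.sub_le k 1
              exact mul_le_mul_of_nonneg_right hk1 (mul_nonneg hEt.le (hDpos t).le)
      refine (step1.trans step2).trans (le_of_eq ?_)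
      rw [hC_def, Finset.sum_mul, Finset.sum_mul]
      refine Finset.sum_congr rfl fun k _ => by ring
    rw [norm_div, norm_neg, Complex.norm_real, Real.norm_eq_abs, abs_of_pos (hDpos t),
      div_le_iff₀ (hDpos t)]
    exact hRbound
end

section
/- Let x ∈ 𝕏^N and 1 ≤ n ≤ N-1. The residue of the meromorphic function Φ(x)(t) = (Σ_{k=1}^{N-1} x_k e^{2πkt/√N})/(1 - e^{2πt√N}) at the simple pole t = in/√N equals -(1/(2π√N)) Σ_{k=1}^{N-1} x_k e^{2πikn/N}. -/
open Finset Complex Filter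

theorem PhiSeq_residue (N : ℕ) (x : ℕ → ℂ)
    (hx0 : x 0 = 0) (hxsum : ∑ n ∈ Finset.Ico 1 N, x n = 0)
    (n : ℕ) (hn1 : 1 ≤ n) (hn2 : n ≤ N - 1) :
    Tendsto (fun t : ℂ => (t - Complex.I * n / Real.sqrt N) * PhiSeq N x t)
      (nhdsWithin (Complex.I * n / Real.sqrt N) {(Complex.I * n / Real.sqrt N : ℂ)}ᶜ)
      (nhds (-(1 / (2 * Real.pi * Real.sqrt N)) *
        ∑ k ∈ Finset.Ico 1 N, x k * Complex.exp (2 * Real.pi * Complex.I * k * n / N))) := by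
  have hN : 2 ≤ N := by omega
  set t₀ : ℂ := Complex.I * n / Real.sqrt N with ht₀
  have hNR : (0:ℝ) < N := by positivity
  have hsR : (0:ℝ) < Real.sqrt N := Real.sqrt_pos.mpr hNR
  have hsC : (Real.sqrt N : ℂ) ≠ 0 := by exact_mod_cast hsR.ne'
  have hssR : Real.sqrt (N:ℝ) * Real.sqrt (N:ℝ) = (N:ℝ) := Real.mul_self_sqrt hNR.le
  have hss : (Real.sqrt N : ℂ) * (Real.sqrt N : ℂ) = (N:ℂ) := by exact_mod_cast hssR
  have hpi : (Real.pi : ℂ) ≠ 0 := by exact_mod_cast Real.pi_ne_zero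
  -- the denominator function
  set g : ℂ → ℂ := fun t => 1 - Complex.exp (2 * Real.pi * t * Real.sqrt N) with hg
  have harg : 2 * (Real.pi:ℂ) * t₀ * Real.sqrt N = n * (2 * Real.pi * Complex.I) := by
    rw [ht₀]; field_simp
  have hexp1 : Complex.exp (2 * Real.pi * t₀ * Real.sqrt N) = 1 := by
    rw [harg, Complex.exp_nat_mul, Complex.exp_two_pi_mul_I, one_pow]
  have hg0 : g t₀ = 0 := by rw [hg]; simp [hexp1]
  have hderiv : HasDerivAt g (-(2 * Real.pi * Real.sqrt N)) t₀ := by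
    have h1 : HasDerivAt (fun t : ℂ => 2 * (Real.pi:ℂ) * t * Real.sqrt N)
        (2 * Real.pi * Real.sqrt N) t₀ := by
      simpa using ((hasDerivAt_id t₀).const_mul (2 * (Real.pi:ℂ))).mul_const
        ((Real.sqrt N : ℂ))
    have h2 := h1.cexp
    have h3 := h2.const_sub 1
    simpa [hexp1] using h3
  have hslope : Tendsto (slope g t₀) (nhdsWithin t₀ {t₀}ᶜ)
      (nhds (-(2 * Real.pi * Real.sqrt N))) :=
    hasDerivAt_iff_tendsto_slope.mp hderiv
  have hne : -(2 * (Real.pi:ℂ) * Real.sqrt N) ≠ 0 := by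
    simp only [neg_ne_zero]
    exact mul_ne_zero (mul_ne_zero two_ne_zero hpi) hsC
  have hslopeinv : Tendsto (fun t => (slope g t₀ t)⁻¹) (nhdsWithin t₀ {t₀}ᶜ)
      (nhds (-(2 * Real.pi * Real.sqrt N))⁻¹) := hslope.inv₀ hne
  -- numerator function
  set S : ℂ → ℂ := fun t =>
    ∑ k ∈ Finset.Ico 1 N, x k * Complex.exp (2 * Real.pi * k * t / Real.sqrt N) with hS
  have hScont : Continuous S := by
    apply continuous_finset_sum
    intro k _
    exact continuous_const.mul (Complex.continuous_exp.comp (by continuity))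
  have hStend : Tendsto S (nhdsWithin t₀ {t₀}ᶜ) (nhds (S t₀)) :=
    (hScont.tendsto t₀).mono_left nhdsWithin_le_nhds
  have hmain : Tendsto (fun t => S t * (slope g t₀ t)⁻¹) (nhdsWithin t₀ {t₀}ᶜ)
      (nhds (S t₀ * (-(2 * (Real.pi:ℂ) * (Real.sqrt N:ℂ)))⁻¹)) := hStend.mul hslopeinv
  have hfun : ∀ t : ℂ, S t * (slope g t₀ t)⁻¹ = (t - t₀) * PhiSeq N x t := by
    intro t
    have : slope g t₀ t = (g t) / (t - t₀) := by
      rw [slope_def_field, hg0, sub_zero, div_eq_div_iff_comm]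
    rw [this, inv_div]
    show S t * ((t - t₀) / g t) = (t - t₀) * (S t / g t)
    ring
  have hval : S t₀ * (-(2 * (Real.pi:ℂ) * Real.sqrt N))⁻¹ =
      -(1 / (2 * Real.pi * Real.sqrt N)) *
        ∑ k ∈ Finset.Ico 1 N, x k * Complex.exp (2 * Real.pi * Complex.I * k * n / N) := by
    have hSval : S t₀ = ∑ k ∈ Finset.Ico 1 N,
        x k * Complex.exp (2 * Real.pi * Complex.I * k * n / N) := by
      apply Finset.sum_congr rfl
      intro k _
      congr 1
      congr 1
      rw [ht₀, ← hss]
      field_simp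
    rw [hSval]
    rw [mul_comm]
    congr 1
    field_simp
  rw [← hval]
  exact hmain.congr hfun
end
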